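/- arXiv:2409.01167 — 2 statements merged into one kernel-verified Lean document; each statement's English description precedes it below -/
import Mathlib

section
/- Let H be an infinite dimensional separable complex Hilbert space and T an injective bounded linear operator on H with dense range. Set A = A_T and B = iA_{−T} on H × H. Then A² = B², the operator X := A + B is injective with dense range, and XA = BX and AX = XB. -/
/-!
Writing `D(R, S)` for the diagonal operator `(x, y) ↦ (R x, S y)`, one has
`A_S A_R = D(R, S)` and `A_T + i A_{-T} = (1 + i) A_{-iT}`. So `A²`, `B²`, `XA`, `BX`, `AX` and `XB`
are all scalar multiples of diagonal operators, whose entries are compared using `i² = -1`;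
and `X` inherits injectivity and density of range from `T`, since `A_S` swaps the
coordinates and applies `S` to one of them.
-/

/-- The operator `A_T` on the Hilbert space direct sum `H ⊕₂ H` given by
`A_T (x, y) = (y, T x)`. -/
noncomputable def AOp {H : Type*} [NormedAddCommGroup H] [InnerProductSpace ℂ H]
    (T : H →L[ℂ] H) : WithLp 2 (H × H) →L[ℂ] WithLp 2 (H × H) :=
  ((WithLp.prodContinuousLinearEquiv 2 ℂ H H).symm : (H × H) →L[ℂ] WithLp 2 (H × H)) ∘L
    ((ContinuousLinearMap.snd ℂ H H).prod (T.comp (ContinuousLinearMap.fst ℂ H H))) ∘L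
      ((WithLp.prodContinuousLinearEquiv 2 ℂ H H) : WithLp 2 (H × H) →L[ℂ] (H × H))

namespace ContinuousLinearMap

variable {𝕜 E F : Type*} [NontriviallyNormedField 𝕜] [NormedAddCommGroup E] [NormedSpace 𝕜 E]
  [NormedAddCommGroup F] [NormedSpace 𝕜 F] {c : 𝕜} {f : E →L[𝕜] F}

theorem injective_smul (hc : c ≠ 0) (hf : Function.Injective f) :
    Function.Injective (c • f) :=
  (smul_right_injective F hc).comp hf

theorem denseRange_smul (hc : c ≠ 0) (hf : DenseRange f) : DenseRange (c • f) :=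
  (MulAction.surjective₀ hc).denseRange.comp hf (continuous_const_smul c)

end ContinuousLinearMap

theorem WithLp.prod_ext {p : ENNReal} {α β : Type*} {x y : WithLp p (α × β)}
    (h₁ : x.fst = y.fst) (h₂ : x.snd = y.snd) : x = y :=
  WithLp.ofLp_injective p (Prod.ext h₁ h₂)

section AOp

variable {H : Type*} [NormedAddCommGroup H] [InnerProductSpace ℂ H]

noncomputable def diagOp (R S : H →L[ℂ] H) : WithLp 2 (H × H) →L[ℂ] WithLp 2 (H × H) :=
  ((WithLp.prodContinuousLinearEquiv 2 ℂ H H).symm : (H × H) →L[ℂ] WithLp 2 (H × H)) ∘L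
    R.prodMap S ∘L ((WithLp.prodContinuousLinearEquiv 2 ℂ H H) : WithLp 2 (H × H) →L[ℂ] (H × H))

theorem smul_diagOp (c : ℂ) (R S : H →L[ℂ] H) : c • diagOp R S = diagOp (c • R) (c • S) := by
  ext1 z
  exact WithLp.prod_ext rfl rfl

variable (T : H →L[ℂ] H)

@[simp] theorem AOp_apply_fst (z : WithLp 2 (H × H)) : (AOp T z).fst = z.snd := rfl

@[simp] theorem AOp_apply_snd (z : WithLp 2 (H × H)) : (AOp T z).snd = T z.fst := rfl

theorem coe_AOp : ⇑(AOp T) = WithLp.toLp 2 ∘ Prod.map id T ∘ Prod.swap ∘ WithLp.ofLp := rfl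

theorem AOp_comp_AOp (S R : H →L[ℂ] H) : (AOp S).comp (AOp R) = diagOp R S := by
  ext1 z
  exact WithLp.prod_ext rfl rfl

theorem AOp_add_I_smul_AOp_neg :
    AOp T + Complex.I • AOp (-T) = (1 + Complex.I) • AOp (-Complex.I • T) := by
  ext1 z
  refine WithLp.prod_ext ?_ ?_
  · simp only [add_apply, smul_apply, WithLp.add_fst, WithLp.smul_fst, AOp_apply_fst]
    module
  · simp only [add_apply, smul_apply, neg_apply, WithLp.add_snd, WithLp.smul_snd,
      AOp_apply_snd]
    match_scalars
    linear_combination Complex.I_sq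

variable {T}

theorem AOp_injective (hT : Function.Injective T) : Function.Injective (AOp T) :=
  fun _ _ h => WithLp.prod_ext (hT (congrArg WithLp.snd h)) (congrArg WithLp.fst h)

theorem AOp_denseRange (hT : DenseRange T) : DenseRange (AOp T) := by
  rw [coe_AOp]
  exact (WithLp.toLp_surjective 2).denseRange.comp
    ((denseRange_id.prodMap hT).comp
      (Prod.swap_surjective.comp (WithLp.ofLp_surjective 2)).denseRange
      (continuous_id.prodMap T.continuous))
    (WithLp.prod_continuous_toLp 2 H H)

end AOp

open ContinuousLinearMap in
theorem stmt_16_general {H : Type*} [NormedAddCommGroup H] [InnerProductSpace ℂ H]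
    (T : H →L[ℂ] H) (hinj : Function.Injective T) (hdr : DenseRange T) :
    (AOp T) ^ 2 = (Complex.I • AOp (-T)) ^ 2 ∧
      Function.Injective (AOp T + Complex.I • AOp (-T)) ∧
      DenseRange (AOp T + Complex.I • AOp (-T)) ∧
      (AOp T + Complex.I • AOp (-T)) * (AOp T) =
        (Complex.I • AOp (-T)) * (AOp T + Complex.I • AOp (-T)) ∧
      (AOp T) * (AOp T + Complex.I • AOp (-T)) =
        (AOp T + Complex.I • AOp (-T)) * (Complex.I • AOp (-T)) := by
  have hc : 1 + Complex.I ≠ 0 := by simp [Complex.ext_iff]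
  have hd : -Complex.I ≠ 0 := neg_ne_zero.2 Complex.I_ne_zero
  rw [AOp_add_I_smul_AOp_neg]
  refine ⟨?_, injective_smul hc (AOp_injective (injective_smul hd hinj)),
    denseRange_smul hc (AOp_denseRange (denseRange_smul hd hdr)), ?_, ?_⟩ <;>
  · simp only [sq, mul_def, smul_comp, comp_smul, smul_smul, AOp_comp_AOp, smul_diagOp]
    congr 1 <;> match_scalars <;> grind [Complex.I_sq]

theorem stmt_16 {H : Type*} [NormedAddCommGroup H] [InnerProductSpace ℂ H]
    [CompleteSpace H] [TopologicalSpace.SeparableSpace H]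
    (hdim : ¬ FiniteDimensional ℂ H)
    (T : H →L[ℂ] H) (hinj : Function.Injective T) (hdr : DenseRange T) :
    (AOp T) ^ 2 = (Complex.I • AOp (-T)) ^ 2 ∧
      Function.Injective (AOp T + Complex.I • AOp (-T)) ∧
      DenseRange (AOp T + Complex.I • AOp (-T)) ∧
      (AOp T + Complex.I • AOp (-T)) * (AOp T) =
        (Complex.I • AOp (-T)) * (AOp T + Complex.I • AOp (-T)) ∧
      (AOp T) * (AOp T + Complex.I • AOp (-T)) =
        (AOp T + Complex.I • AOp (-T)) * (Complex.I • AOp (-T)) :=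
  stmt_16_general T hinj hdr
end

section
/- Let H be an infinite dimensional separable complex Hilbert space. Every bounded linear operator on H has a nontrivial closed invariant subspace if and only if every pair {A, B} of commuting bounded operators on H satisfying A² = B² has a common nontrivial closed invariant subspace. -/
/-- `T` has a nontrivial closed invariant subspace. -/
def HasNontrivialClosedInvariantSubspace {H : Type*} [NormedAddCommGroup H]
    [InnerProductSpace ℂ H] (T : H →L[ℂ] H) : Prop :=
  ∃ M : Submodule ℂ H, IsClosed (M : Set H) ∧ M ≠ ⊥ ∧ M ≠ ⊤ ∧ ∀ x ∈ M, T x ∈ M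

/-!
If `A = ±B`, an invariant subspace of `A` is invariant under `B`. Otherwise, since `A` and `B`
commute, `(A + B)(A - B) = A² - B² = 0`, so the closure of the range of `A - B` is a closed
subspace, invariant under everything commuting with `A - B`, nonzero because `A ≠ B` and proper
because `A + B ≠ 0` vanishes on it.
-/

theorem LinearMap.range_mem_invtSubmodule_of_commute {R M : Type*} [Semiring R]
    [AddCommMonoid M] [Module R M] {f g : Module.End R M} (h : Commute f g) :
    LinearMap.range g ∈ f.invtSubmodule := by
  rw [Module.End.mem_invtSubmodule_iff_map_le, ← LinearMap.range_comp]
  change LinearMap.range (f * g) ≤ _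
  exact h.eq ▸ LinearMap.range_comp_le_range f g

namespace ContinuousLinearMap

variable {R E : Type*} [Ring R] [TopologicalSpace E] [AddCommGroup E] [Module R E]
  [IsTopologicalAddGroup E]

theorem topologicalClosure_range_mem_invtSubmodule [TopologicalSpace R] [ContinuousSMul R E]
    {T C : E →L[R] E} (h : Commute T C) :
    (LinearMap.range (C : E →ₗ[R] E)).topologicalClosure ∈
      Module.End.invtSubmodule (T : E →ₗ[R] E) :=
  Submodule.topologicalClosure_mem_invtSubmodule
    (LinearMap.range_mem_invtSubmodule_of_commute (h.map toLinearMapRingHom))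

theorem topologicalClosure_range_le_ker_of_mul_eq_zero [ContinuousConstSMul R E] [T1Space E]
    {C D : E →L[R] E} (h : D * C = 0) :
    (LinearMap.range (C : E →ₗ[R] E)).topologicalClosure ≤ LinearMap.ker (D : E →ₗ[R] E) :=
  Submodule.topologicalClosure_minimal _
    (LinearMap.range_le_ker_iff.mpr (congrArg toLinearMapRingHom h)) D.isClosed_ker

theorem exists_closed_invtSubmodule_of_commute_of_sq_eq_sq [TopologicalSpace R]
    [ContinuousSMul R E] [T1Space E] {A B : E →L[R] E} (hcomm : Commute A B)
    (hsq : A ^ 2 = B ^ 2) (hne : A ≠ B) (hne_neg : A ≠ -B) :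
    ∃ M : Submodule R E, IsClosed (M : Set E) ∧ M ≠ ⊥ ∧ M ≠ ⊤ ∧
      M ∈ Module.End.invtSubmodule (A : E →ₗ[R] E) ∧
      M ∈ Module.End.invtSubmodule (B : E →ₗ[R] E) := by
  set C : E →L[R] E := A - B
  set D : E →L[R] E := A + B
  set M := (LinearMap.range (C : E →ₗ[R] E)).topologicalClosure
  have hM_ker : M ≤ LinearMap.ker (D : E →ₗ[R] E) :=
    topologicalClosure_range_le_ker_of_mul_eq_zero <| by rw [← hcomm.sq_sub_sq, hsq, sub_self]
  refine ⟨M, Submodule.isClosed_topologicalClosure _, fun hbot => hne ?_, fun htop => hne_neg ?_,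
    topologicalClosure_range_mem_invtSubmodule ((Commute.refl A).sub_right hcomm),
    topologicalClosure_range_mem_invtSubmodule (hcomm.symm.sub_right (Commute.refl B))⟩
  · have hC : LinearMap.range (C : E →ₗ[R] E) = ⊥ :=
      eq_bot_iff.mpr (hbot ▸ Submodule.le_topologicalClosure _)
    exact sub_eq_zero.mp (coe_injective (LinearMap.range_eq_bot.mp hC))
  · have hD : LinearMap.ker (D : E →ₗ[R] E) = ⊤ := eq_top_iff.mpr (htop ▸ hM_ker)
    exact eq_neg_of_add_eq_zero_left (coe_injective (LinearMap.ker_eq_top.mp hD))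

end ContinuousLinearMap

theorem stmt_17_general {H : Type*} [NormedAddCommGroup H] [InnerProductSpace ℂ H] :
    (∀ T : H →L[ℂ] H, HasNontrivialClosedInvariantSubspace T) ↔
      (∀ A B : H →L[ℂ] H, A * B = B * A → A ^ 2 = B ^ 2 →
        ∃ M : Submodule ℂ H, IsClosed (M : Set H) ∧ M ≠ ⊥ ∧ M ≠ ⊤ ∧
          (∀ x ∈ M, A x ∈ M) ∧ ∀ x ∈ M, B x ∈ M) := by
  refine ⟨fun h A B hcomm hsq => ?_, fun h T => ?_⟩
  · by_cases hAB : A = B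
    · obtain ⟨M, hclosed, hbot, htop, hA⟩ := h A
      exact ⟨M, hclosed, hbot, htop, hA, hAB ▸ hA⟩
    by_cases hAB_neg : A = -B
    · obtain ⟨M, hclosed, hbot, htop, hB⟩ := h B
      refine ⟨M, hclosed, hbot, htop, fun x hx => ?_, hB⟩
      simpa [hAB_neg] using M.neg_mem (hB x hx)
    exact ContinuousLinearMap.exists_closed_invtSubmodule_of_commute_of_sq_eq_sq hcomm hsq hAB
      hAB_neg
  · obtain ⟨M, hclosed, hbot, htop, hT, -⟩ := h T T rfl rfl
    exact ⟨M, hclosed, hbot, htop, hT⟩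

theorem stmt_17 {H : Type*} [NormedAddCommGroup H] [InnerProductSpace ℂ H]
    [CompleteSpace H] [TopologicalSpace.SeparableSpace H]
    (hdim : ¬ FiniteDimensional ℂ H) :
    (∀ T : H →L[ℂ] H, HasNontrivialClosedInvariantSubspace T) ↔
      (∀ A B : H →L[ℂ] H, A * B = B * A → A ^ 2 = B ^ 2 →
        ∃ M : Submodule ℂ H, IsClosed (M : Set H) ∧ M ≠ ⊥ ∧ M ≠ ⊤ ∧
          (∀ x ∈ M, A x ∈ M) ∧ ∀ x ∈ M, B x ∈ M) :=
  stmt_17_general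
end
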